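/- For all integers N and r with 2 ≤ r ≤ N, the coefficients a_{0,r} satisfy the unrolled recursion a_{0,r}(N+1,x) = (x − r + 1) · Σ_{i=0}^{N−r+1} (−1)^i (N)_i · a_{0,r−1}(N−i,x), where (N)_i = N(N−1)⋯(N−i+1). -/

import Mathlib

open Finset

/-- Falling factorial `(x)_n = x(x-1)⋯(x-n+1)`, with `(x)_0 = 1`. -/
noncomputable def fallingFactorial (x : ℝ) (n : ℕ) : ℝ := ∏ i ∈ Finset.range n, (x - i)

/-- The coefficients `a_{i,j}(N, x)` arising from repeated differentiation of the
λ-Changhee generating function: `a_{0,0}(N,x) = 0`, `a_{1,0}(1,x) = -1`, `a_{0,1}(1,x) = x`,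
and for `N ≥ 1`, `i, j ≥ 0` with `1 ≤ i + j ≤ N + 1`,
`a_{i,j}(N+1,x) = -N·a_{i,j}(N,x) - i·a_{i-1,j}(N,x) + (x - j + 1)·a_{i,j-1}(N,x)`,
with the convention that `a_{i,j}(N,x) = 0` whenever `i < 0`, `j < 0`, or `i + j > N`. -/
noncomputable def aCh : ℕ → ℤ → ℤ → ℝ → ℝ
  | 0, _, _, _ => 0
  | 1, i, j, x => if i = 1 ∧ j = 0 then -1 else if i = 0 ∧ j = 1 then x else 0
  | (N+2), i, j, x =>
      if 0 ≤ i ∧ 0 ≤ j ∧ 1 ≤ i + j ∧ i + j ≤ N + 2 then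
        -(N+1 : ℝ) * aCh (N+1) i j x - (i : ℝ) * aCh (N+1) (i-1) j x
          + (x - (j : ℝ) + 1) * aCh (N+1) i (j-1) x
      else 0

/-! Along the column `i = 0` the defining recursion is the first-order linear recurrence
`b(M+1) = -M·b(M) + c(M)` for `b(M) = a_{0,r}(M,x)` and `c(M) = (x-r+1)·a_{0,r-1}(M,x)`,
valid for `M ≥ r-1 ≥ 1`. Unrolling it down to `M = r-1`, where `b` vanishes, accumulates the
factors `-M` into the signed falling factorials `(-1)^i (N)_i`. -/

lemma fallingFactorial_zero (x : ℝ) : fallingFactorial x 0 = 1 := by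
  simp [fallingFactorial]

lemma fallingFactorial_succ (x : ℝ) (n : ℕ) :
    fallingFactorial x (n + 1) = x * fallingFactorial (x - 1) n := by
  rw [fallingFactorial, fallingFactorial, prod_range_succ', mul_comm]
  simp only [Nat.cast_add, Nat.cast_one, Nat.cast_zero, sub_zero, sub_add_eq_sub_sub,
    sub_right_comm x _ (1 : ℝ)]

lemma sum_fallingFactorial_of_linear_rec {b c : ℕ → ℝ} {m : ℕ} (hbm : b m = 0)
    (hrec : ∀ M, m ≤ M → b (M + 1) = -M * b M + c M) {N : ℕ} (hN : m ≤ N) :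
    b (N + 1) = ∑ i ∈ range (N - m + 1), (-1) ^ i * fallingFactorial N i * c (N - i) := by
  induction N, hN using Nat.le_induction with
  | base => simp [hrec m le_rfl, hbm, fallingFactorial_zero]
  | succ N hN ih =>
    have hterm : ∀ i ∈ range (N - m + 1),
        (-1 : ℝ) ^ (i + 1) * fallingFactorial ((N + 1 : ℕ) : ℝ) (i + 1) * c (N + 1 - (i + 1))
          = -(N + 1) * ((-1) ^ i * fallingFactorial N i * c (N - i)) := by
      intro i _
      rw [fallingFactorial_succ, Nat.add_sub_add_right, Nat.cast_succ, add_sub_cancel_right]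
      ring
    rw [show N + 1 - m + 1 = N - m + 1 + 1 by omega, sum_range_succ', sum_congr rfl hterm,
      ← mul_sum, ← ih, hrec (N + 1) (by omega)]
    simp [fallingFactorial_zero]

lemma aCh_zero_of_lt (M : ℕ) (j : ℤ) (hj : (M : ℤ) < j) (x : ℝ) : aCh M 0 j x = 0 := by
  match M with
  | 0 => rfl
  | 1 => rw [aCh, if_neg (by omega), if_neg (by omega)]
  | M + 2 => rw [aCh, if_neg (by push_cast at hj; omega)]

lemma aCh_zero_succ (M : ℕ) (hM : 1 ≤ M) (j : ℤ) (hj1 : 1 ≤ j) (hj2 : j ≤ M + 1) (x : ℝ) :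
    aCh (M + 1) 0 j x = -M * aCh M 0 j x + (x - j + 1) * aCh M 0 (j - 1) x := by
  obtain ⟨M, rfl⟩ : ∃ K, M = K + 1 := ⟨M - 1, by omega⟩
  rw [aCh, if_pos (by push_cast at hj2; omega)]
  push_cast
  ring

/-- Unrolled recursion: for `2 ≤ r ≤ N`,
`a_{0,r}(N+1,x) = (x - r + 1) · ∑_{i=0}^{N-r+1} (-1)^i (N)_i · a_{0,r-1}(N-i,x)`. -/
theorem aCh_zero_r_unrolled (N r : ℕ) (hr1 : 2 ≤ r) (hr2 : r ≤ N) (x : ℝ) :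
    aCh (N + 1) 0 (r : ℤ) x
      = (x - (r : ℝ) + 1) *
          ∑ i ∈ Finset.range (N - r + 2),
            (-1 : ℝ) ^ i * fallingFactorial (N : ℝ) i * aCh (N - i) 0 ((r : ℤ) - 1) x := by
  have hunrolled := sum_fallingFactorial_of_linear_rec
    (b := fun M ↦ aCh M 0 r x) (c := fun M ↦ (x - r + 1) * aCh M 0 (r - 1) x) (m := r - 1)
    (aCh_zero_of_lt _ _ (by omega) x)
    (fun M hM ↦ by simpa using aCh_zero_succ M (by omega) r (by omega) (by omega) x)
    (N := N) (by omega)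
  rw [hunrolled, show N - (r - 1) + 1 = N - r + 2 by omega, mul_sum]
  exact sum_congr rfl fun i _ ↦ by ring
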